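/- arXiv:1510.04968 — 5 statements merged into one kernel-verified Lean document; each statement's English description precedes it below -/
import Mathlib

section
/- Let W be a compound Poisson random variable with finite jump intensity measure Λ on ℝ (jumps occur at rate ‖Λ‖ per unit time, jump sizes i.i.d. with law Λ/‖Λ‖), observed at time h, and let F denote its cumulative distribution function. Then for every y ∈ ℝ, the distribution function of the sum of two independent copies (the convolution) satisfies F^{*2}(y) = F(y) + Σ_{n=1}^∞ (h^n/n!) ∫_{ℝ^n} U_{x_1,...,x_n}F(y) Λ(dx_1)⋯Λ(dx_n). -/
/-!
Write `μ_h` for the compound Poisson law, `Λ^{*k}` for the (unnormalised) `k`-fold convolution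
power and `b_k = ∫ f dΛ^{*k}` for a bounded measurable `f`. Conditioning on the number of jumps,
`∫ f dμ_h = e^{-h‖Λ‖} ∑_k h^k/k! b_k`. On the other side, integrating the single term
`f (∑_{j∈J} x_j)` against `Λ^m` gives `‖Λ‖^{m-|J|} b_{|J|}`, so `h^m/m! ∫ U_x f dΛ^m` is the
`m`-th coefficient of the Cauchy product of `∑ h^k/k! b_k` with the exponential series of
`-h‖Λ‖`. For `f = F(y - ·)` the left side is `F^{*2}(y)` and the `m = 0` term is `F(y)`.
-/

open MeasureTheory

/-- The distribution at time `h` of a compound Poisson process with finite jump intensity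
measure `Λ`: jumps occur at rate `‖Λ‖` and jump sizes are i.i.d. with law `Λ/‖Λ‖`, so the
law of `W_h` is the Poisson mixture `∑_n e^{-h‖Λ‖}(h‖Λ‖)^n/n! · (Λ/‖Λ‖)^{*n}`. -/
noncomputable def compoundPoisson (Λ : Measure ℝ) (h : ℝ) : Measure ℝ :=
  Measure.sum fun n : ℕ =>
    (ENNReal.ofReal (Real.exp (-(h * (Λ Set.univ).toReal)) *
        (h * (Λ Set.univ).toReal) ^ n / (Nat.factorial n : ℝ))) •
      Measure.map (fun x : Fin n → ℝ => ∑ i, x i)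
        (Measure.pi fun _ : Fin n => (Λ Set.univ)⁻¹ • Λ)

open Finset
open scoped ENNReal Nat

lemma pow_div_factorial_mul_choose {k m : ℕ} (hkm : k ≤ m) (t c b : ℝ) :
    t ^ m / m ! * (m.choose k * (c ^ (m - k) * b))
      = t ^ k / k ! * b * ((t * c) ^ (m - k) / (m - k)!) := by
  obtain ⟨j, rfl⟩ := Nat.exists_eq_add_of_le hkm
  rw [Nat.cast_choose ℝ hkm, Nat.add_sub_cancel_left, pow_add, mul_pow]
  field_simp

lemma Real.hasSum_pow_div_factorial (x : ℝ) : HasSum (fun n => x ^ n / n !) (Real.exp x) := by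
  rw [Real.exp_eq_exp_ℝ]
  exact NormedSpace.expSeries_div_hasSum_exp x

lemma MeasureTheory.Measure.pi_const_smul {α ι : Type*} [MeasurableSpace α] [Fintype ι]
    (μ : Measure α) [IsFiniteMeasure μ] {c : ℝ≥0∞} (hc : c ≠ ∞) :
    Measure.pi (fun _ : ι => c • μ) = c ^ Fintype.card ι • Measure.pi fun _ : ι => μ := by
  have : IsFiniteMeasure (c • μ) := Measure.smul_finite μ hc
  refine Measure.pi_eq fun s _ => ?_
  simp [Measure.pi_pi, Finset.prod_mul_distrib]

lemma map_add_prod_Iic_toReal (μ ν : Measure ℝ) [IsFiniteMeasure ν] (y : ℝ) :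
    (Measure.map (fun p : ℝ × ℝ => p.1 + p.2) (μ.prod ν) (Set.Iic y)).toReal
      = ∫ a, (ν (Set.Iic (y - a))).toReal ∂μ := by
  have hs : MeasurableSet ((fun p : ℝ × ℝ => p.1 + p.2) ⁻¹' Set.Iic y) :=
    measurableSet_Iic.preimage (by fun_prop)
  have hsection (a : ℝ) :
      Prod.mk a ⁻¹' ((fun p : ℝ × ℝ => p.1 + p.2) ⁻¹' Set.Iic y) = Set.Iic (y - a) := by
    ext b
    simp [le_sub_iff_add_le']
  rw [integral_toReal _ (ae_of_all _ fun _ => measure_lt_top ν _),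
    Measure.map_apply (by fun_prop) measurableSet_Iic, Measure.prod_apply hs]
  · simp_rw [hsection]
  · simpa [hsection] using (measurable_measure_prodMk_left (ν := ν) hs).aemeasurable

noncomputable def convPow (Λ : Measure ℝ) (m : ℕ) : Measure ℝ :=
  Measure.map (fun x : Fin m → ℝ => ∑ i, x i) (Measure.pi fun _ : Fin m => Λ)

lemma convPow_univ (Λ : Measure ℝ) [SigmaFinite Λ] (m : ℕ) :
    convPow Λ m Set.univ = Λ Set.univ ^ m := by
  rw [convPow, Measure.map_apply (by fun_prop) MeasurableSet.univ, Set.preimage_univ,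
    Measure.pi_univ, Finset.prod_const, Finset.card_univ, Fintype.card_fin]

/-- `U_{x_1,…,x_m}F(y)` of the paper is `finiteDifference (fun t => F (y - t)) x`. -/
noncomputable def finiteDifference (f : ℝ → ℝ) {m : ℕ} (x : Fin m → ℝ) : ℝ :=
  ∑ J : Finset (Fin m), (-1 : ℝ) ^ (m - #J) * f (∑ j ∈ J, x j)

section
variable (Λ : Measure ℝ)

lemma map_sum_pi_eq_convPow [SigmaFinite Λ] {ι : Type*} [Fintype ι] :
    Measure.map (fun x : ι → ℝ => ∑ j, x j) (Measure.pi fun _ : ι => Λ)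
      = convPow Λ (Fintype.card ι) := by
  let e := (Fintype.equivFin ι).symm
  rw [convPow, ← (measurePreserving_piCongrLeft (fun _ => Λ) e).map_eq,
    Measure.map_map (by fun_prop) (MeasurableEquiv.measurable _)]
  congr 1
  funext x
  rw [Function.comp_apply, ← e.sum_comp]
  simp [MeasurableEquiv.coe_piCongrLeft, Equiv.piCongrLeft_apply_apply]

lemma map_sum_subset_pi [SigmaFinite Λ] {ι : Type*} [Fintype ι] (J : Finset ι) :
    Measure.map (fun x : ι → ℝ => ∑ j ∈ J, x j) (Measure.pi fun _ : ι => Λ)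
      = Λ Set.univ ^ (Fintype.card ι - #J) • convPow Λ #J := by
  classical
  let e := MeasurableEquiv.piEquivPiSubtypeProd (fun _ : ι => ℝ) (· ∈ J)
  have hsum : (fun x : ι → ℝ => ∑ j ∈ J, x j)
      = (fun u : J → ℝ => ∑ j, u j) ∘ Prod.fst ∘ e := by
    funext x
    exact (Finset.sum_coe_sort J x).symm
  rw [hsum, ← Measure.map_map (by fun_prop) (measurable_fst.comp e.measurable),
    ← Measure.map_map measurable_fst e.measurable,
    (measurePreserving_piEquivPiSubtypeProd (fun _ : ι => Λ) (· ∈ J)).map_eq,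
    Measure.map_fst_prod, Measure.map_smul]
  congr 1
  · rw [Measure.pi_univ, Finset.prod_const, Finset.card_univ, Fintype.card_subtype_compl,
      Fintype.card_coe]
  · rw [← Fintype.card_coe J]
    -- the `Fintype ↥J` instances of the sum and of `Measure.pi` differ
    convert map_sum_pi_eq_convPow Λ (ι := J)

variable [IsFiniteMeasure Λ]

instance isFiniteMeasure_convPow (m : ℕ) : IsFiniteMeasure (convPow Λ m) := by
  unfold convPow; infer_instance

lemma compoundPoisson_eq_sum (h : ℝ) :
    compoundPoisson Λ h = Measure.sum fun n : ℕ =>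
      ENNReal.ofReal (Real.exp (-(h * (Λ Set.univ).toReal)) * h ^ n / n !) • convPow Λ n := by
  refine congrArg Measure.sum (funext fun n => ?_)
  -- for `Λ = 0` the normalisation `(Λ univ)⁻¹` is `∞`
  rcases eq_zero_or_neZero Λ with rfl | hΛ
  · rcases n with _ | n
    · simp [convPow]
    · have hpow : convPow 0 (n + 1) = 0 :=
        Measure.measure_univ_eq_zero.mp (by simp [convPow_univ])
      simp [hpow]
  · have hl : 0 < (Λ Set.univ).toReal := ENNReal.toReal_pos (NeZero.ne _) (measure_ne_top Λ _)
    have hinv : (Λ Set.univ)⁻¹ = ENNReal.ofReal (Λ Set.univ).toReal⁻¹ := by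
      rw [ENNReal.ofReal_inv_of_pos hl, ENNReal.ofReal_toReal (measure_ne_top Λ _)]
    rw [Measure.pi_const_smul Λ (ENNReal.inv_ne_top.mpr (NeZero.ne _)), Measure.map_smul,
      smul_smul, Fintype.card_fin, hinv, ← ENNReal.ofReal_pow (by positivity),
      ← ENNReal.ofReal_mul' (by positivity)]
    congr 2
    rw [mul_pow, inv_pow]
    field_simp

lemma isProbabilityMeasure_compoundPoisson {h : ℝ} (hh : 0 ≤ h) :
    IsProbabilityMeasure (compoundPoisson Λ h) := by
  have hmass (n : ℕ) :
      ENNReal.ofReal (Real.exp (-(h * (Λ Set.univ).toReal)) * h ^ n / n !) * Λ Set.univ ^ n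
        = ENNReal.ofReal (Real.exp (-(h * (Λ Set.univ).toReal)) *
            ((h * (Λ Set.univ).toReal) ^ n / n !)) := by
    rw [show Real.exp (-(h * (Λ Set.univ).toReal)) * ((h * (Λ Set.univ).toReal) ^ n / n !)
        = Real.exp (-(h * (Λ Set.univ).toReal)) * h ^ n / n ! * (Λ Set.univ).toReal ^ n by ring,
      ENNReal.ofReal_mul (by positivity), ENNReal.ofReal_pow ENNReal.toReal_nonneg,
      ENNReal.ofReal_toReal (measure_ne_top Λ _)]
  have hexp := (Real.hasSum_pow_div_factorial (h * (Λ Set.univ).toReal)).mul_left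
    (Real.exp (-(h * (Λ Set.univ).toReal)))
  constructor
  rw [compoundPoisson_eq_sum, Measure.sum_apply _ MeasurableSet.univ]
  simp_rw [Measure.smul_apply, convPow_univ, smul_eq_mul, hmass]
  rw [← ENNReal.ofReal_tsum_of_nonneg (fun n => by positivity) hexp.summable, hexp.tsum_eq,
    ← Real.exp_add, neg_add_cancel, Real.exp_zero, ENNReal.ofReal_one]

variable {f : ℝ → ℝ} {C : ℝ}

lemma integral_compoundPoisson (hf : Measurable f) (hC : ∀ x, ‖f x‖ ≤ C) {h : ℝ}
    (hh : 0 ≤ h) :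
    ∫ x, f x ∂compoundPoisson Λ h
      = Real.exp (-(h * (Λ Set.univ).toReal)) * ∑' n : ℕ, h ^ n / n ! * ∫ x, f x ∂convPow Λ n := by
  have := isProbabilityMeasure_compoundPoisson Λ hh
  have hint : Integrable f (compoundPoisson Λ h) :=
    .of_bound hf.aestronglyMeasurable C (ae_of_all _ hC)
  rw [compoundPoisson_eq_sum] at hint ⊢
  rw [integral_sum_measure hint, ← tsum_mul_left]
  refine tsum_congr fun n => ?_
  rw [integral_smul_measure, ENNReal.toReal_ofReal (by positivity), smul_eq_mul]
  ring

lemma norm_integral_convPow_le (hC : ∀ x, ‖f x‖ ≤ C) (m : ℕ) :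
    ‖∫ x, f x ∂convPow Λ m‖ ≤ C * (Λ Set.univ).toReal ^ m := by
  simpa [Measure.real, convPow_univ] using
    norm_integral_le_of_norm_le_const (μ := convPow Λ m) (ae_of_all _ hC)

lemma integral_comp_sum_subset (hf : Measurable f) {ι : Type*} [Fintype ι] (J : Finset ι) :
    ∫ x : ι → ℝ, f (∑ j ∈ J, x j) ∂(Measure.pi fun _ => Λ)
      = (Λ Set.univ).toReal ^ (Fintype.card ι - #J) * ∫ x, f x ∂convPow Λ #J := by
  rw [← integral_map (by fun_prop) hf.aestronglyMeasurable, map_sum_subset_pi,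
    integral_smul_measure, ENNReal.toReal_pow, smul_eq_mul]

lemma integral_finiteDifference (hf : Measurable f) (hC : ∀ x, ‖f x‖ ≤ C) (m : ℕ) :
    ∫ x : Fin m → ℝ, finiteDifference f x ∂(Measure.pi fun _ => Λ)
      = ∑ k ∈ range (m + 1),
          m.choose k * ((-(Λ Set.univ).toReal) ^ (m - k) * ∫ x, f x ∂convPow Λ k) := by
  have hint (J : Finset (Fin m)) :
      Integrable (fun x : Fin m → ℝ => f (∑ j ∈ J, x j)) (Measure.pi fun _ => Λ) :=
    .of_bound (hf.comp (by fun_prop)).aestronglyMeasurable C (ae_of_all _ fun _ => hC _)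
  unfold finiteDifference
  rw [integral_finsetSum _ fun J _ => (hint J).const_mul _]
  simp_rw [integral_const_mul, integral_comp_sum_subset Λ hf, Fintype.card_fin, ← mul_assoc,
    ← mul_pow, neg_one_mul]
  rw [← Finset.powerset_univ, Finset.sum_powerset_apply_card
    (fun k => (-(Λ Set.univ).toReal) ^ (m - k) * ∫ x, f x ∂convPow Λ k), card_univ,
    Fintype.card_fin]
  simp [nsmul_eq_mul, mul_assoc]

lemma hasSum_integral_finiteDifference (hf : Measurable f) (hC : ∀ x, ‖f x‖ ≤ C) (t : ℝ) :
    HasSum (fun m => t ^ m / m ! * ∫ x : Fin m → ℝ, finiteDifference f x ∂(Measure.pi fun _ => Λ))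
      (Real.exp (-(t * (Λ Set.univ).toReal)) * ∑' k, t ^ k / k ! * ∫ x, f x ∂convPow Λ k) := by
  have hb : Summable fun k => ‖t ^ k / k ! * ∫ x, f x ∂convPow Λ k‖ := by
    refine .of_nonneg_of_le (fun _ => norm_nonneg _) (fun k => ?_)
      ((Real.summable_pow_div_factorial (‖t‖ * (Λ Set.univ).toReal)).mul_left C)
    rw [norm_mul, norm_div, norm_pow, Real.norm_natCast, mul_pow]
    calc _ ≤ ‖t‖ ^ k / k ! * (C * (Λ Set.univ).toReal ^ k) := by
          gcongr; exact norm_integral_convPow_le Λ hC k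
      _ = _ := by ring
  rw [mul_comm, ← (Real.hasSum_pow_div_factorial _).tsum_eq]
  refine (hasSum_sum_range_mul_of_summable_norm hb
    (NormedSpace.norm_expSeries_div_summable _)).congr_fun fun m => ?_
  rw [integral_finiteDifference Λ hf hC, Finset.mul_sum]
  refine Finset.sum_congr rfl fun k hk => ?_
  rw [← mul_neg]
  exact pow_div_factorial_mul_choose (Nat.lt_succ_iff.mp (mem_range.mp hk)) _ _ _

lemma hasSum_integral_finiteDifference_compoundPoisson (hf : Measurable f)
    (hC : ∀ x, ‖f x‖ ≤ C) {h : ℝ} (hh : 0 ≤ h) :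
    HasSum (fun m => h ^ m / m ! * ∫ x : Fin m → ℝ, finiteDifference f x ∂(Measure.pi fun _ => Λ))
      (∫ x, f x ∂compoundPoisson Λ h) := by
  rw [integral_compoundPoisson Λ hf hC hh]
  exact hasSum_integral_finiteDifference Λ hf hC h

end

theorem convolution_expansion_general (Λ : Measure ℝ) [IsFiniteMeasure Λ]
    (h : ℝ) (hh : 0 < h)
    (F : ℝ → ℝ) (hFdef : ∀ y, F y = ((compoundPoisson Λ h) (Set.Iic y)).toReal)
    (y : ℝ) :
    ((Measure.map (fun p : ℝ × ℝ => p.1 + p.2)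
        ((compoundPoisson Λ h).prod (compoundPoisson Λ h))) (Set.Iic y)).toReal =
      F y + ∑' n : ℕ,
        (h ^ (n + 1) / (Nat.factorial (n + 1) : ℝ)) *
          ∫ x : Fin (n + 1) → ℝ,
            (∑ J : Finset (Fin (n + 1)),
              (-1 : ℝ) ^ ((n + 1) - J.card) * F (y - ∑ j ∈ J, x j))
            ∂(Measure.pi fun _ : Fin (n + 1) => Λ) := by
  have := isProbabilityMeasure_compoundPoisson Λ hh.le
  have hF : Monotone F := fun a b hab => by
    simp only [hFdef]
    exact measureReal_mono (Set.Iic_subset_Iic.mpr hab)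
  have hFbound (t : ℝ) : ‖F (y - t)‖ ≤ 1 := by
    rw [hFdef, Real.norm_eq_abs, abs_of_nonneg ENNReal.toReal_nonneg]
    exact measureReal_le_one
  have hsum := hasSum_integral_finiteDifference_compoundPoisson Λ (f := fun t => F (y - t))
    (hF.measurable.comp (by fun_prop)) hFbound hh.le
  simp_rw [map_add_prod_Iic_toReal, ← hFdef, ← hsum.tsum_eq, hsum.summable.tsum_eq_zero_add]
  simp [finiteDifference, Finset.eq_empty_of_isEmpty, Measure.real]

/-- Theorem 2 (Main) of the paper: with `F` the c.d.f. of the compound Poisson variable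
`W_h` and `F^{*2}` the c.d.f. of the sum of two independent copies (the convolution),
`F^{*2}(y) = F(y) + ∑_{n≥1} (h^n/n!) ∫_{ℝ^n} U_{x_1,…,x_n}F(y) Λ(dx_1)⋯Λ(dx_n)`,
where `U_{x_1,…,x_n}F(y) = ∑_{J ⊆ {1,…,n}} (-1)^{n-|J|} F(y - ∑_{j∈J} x_j)`. -/
theorem convolution_expansion (Λ : Measure ℝ) [IsFiniteMeasure Λ] (hΛ0 : Λ {0} = 0)
    (h : ℝ) (hh : 0 < h)
    (F : ℝ → ℝ) (hFdef : ∀ y, F y = ((compoundPoisson Λ h) (Set.Iic y)).toReal)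
    (y : ℝ) :
    ((Measure.map (fun p : ℝ × ℝ => p.1 + p.2)
        ((compoundPoisson Λ h).prod (compoundPoisson Λ h))) (Set.Iic y)).toReal =
      F y + ∑' n : ℕ,
        (h ^ (n + 1) / (Nat.factorial (n + 1) : ℝ)) *
          ∫ x : Fin (n + 1) → ℝ,
            (∑ J : Finset (Fin (n + 1)),
              (-1 : ℝ) ^ ((n + 1) - J.card) * F (y - ∑ j ∈ J, x j))
            ∂(Measure.pi fun _ : Fin (n + 1) => Λ) :=
  convolution_expansion_general Λ h hh F hFdef y
end

section
/- Let L be a strongly differentiable functional on finite signed measures possessing a gradient function ∇L(x;Λ), i.e., DL(Λ)[ν] = ∫ ∇L(x;Λ) ν(dx) for all finite signed ν. If a finite nonnegative measure Λ is a local minimizer of L over the cone of finite nonnegative measures, then ∇L(x;Λ) ≥ 0 for all x and ∇L(x;Λ) = 0 for Λ-almost every x. -/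
/-!
Perturb `Λ` along a ray `Λ + t ν`, `t ↓ 0`, that stays in the cone of finite measures. Local
minimality gives `L (Λ + t ν) - L Λ ≥ 0`, while strong differentiability makes this
`t ∫ ∇L dν + o(t)`; hence `∫ ∇L dν ≥ 0` for every such direction. The direction `ν = δₓ` gives
`∇L(x) ≥ 0`, and `ν = -Λ` (the ray `(1 - t) Λ`) gives `∫ ∇L dΛ ≤ 0`, so the nonnegative function
`∇L` vanishes `Λ`-a.e.
-/

open MeasureTheory

/-- Total variation norm on the space of finite signed Borel measures on `ℝ`. -/
noncomputable def tvNorm (ν : SignedMeasure ℝ) : ℝ := (ν.totalVariation Set.univ).toReal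

/-- Integral of a function against a finite signed measure, via its Jordan decomposition. -/
noncomputable def signedIntegral (f : ℝ → ℝ) (ν : SignedMeasure ℝ) : ℝ :=
  (∫ x, f x ∂ν.toJordanDecomposition.posPart) - ∫ x, f x ∂ν.toJordanDecomposition.negPart

open Filter Topology
open scoped NNReal

theorem nonneg_of_isLocalMinOn_of_eventually_mem_ray {E : Type*} [Add E] [SMul ℝ≥0 E]
    {L D N : E → ℝ} {K : Set E} {x v : E}
    (hdiff : ∀ ε > 0, ∃ δ > 0, ∀ w, N w ≤ δ → |L (x + w) - L x - D w| ≤ ε * N w)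
    (hD : ∀ t : ℝ≥0, D (t • v) = t * D v) (hN : ∀ t : ℝ≥0, N (t • v) = t * N v)
    (hmin : ∃ δ > 0, ∀ w, x + w ∈ K → N w ≤ δ → L x ≤ L (x + w))
    (hv : ∀ᶠ t in 𝓝[>] (0 : ℝ≥0), x + t • v ∈ K) : 0 ≤ D v := by
  obtain ⟨δ₀, hδ₀, hmin⟩ := hmin
  have hsmall : ∀ δ > 0, ∀ᶠ t : ℝ≥0 in 𝓝[>] 0, (t : ℝ) * N v ≤ δ := fun δ hδ =>
    ((Continuous.tendsto' (by fun_prop) 0 0 (by simp)).mono_left nhdsWithin_le_nhds).eventually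
      (ge_mem_nhds hδ)
  have hslope : ∀ ε > 0, 0 ≤ D v + ε * N v := by
    intro ε hε
    obtain ⟨δ, hδ, hd⟩ := hdiff ε hε
    obtain ⟨t, ⟨⟨hvt, hδ₀t⟩, hδt⟩, ht⟩ :=
      (((hv.and (hsmall δ₀ hδ₀)).and (hsmall δ hδ)).and self_mem_nhdsWithin).exists
    have hle := hmin (t • v) hvt (by rwa [hN])
    have hlin := (abs_le.mp (hd (t • v) (by rwa [hN]))).2
    rw [hD, hN] at hlin
    exact (mul_nonneg_iff_of_pos_left (show (0 : ℝ) < t from ht)).mp (by linarith)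
  have hlim : Tendsto (fun ε : ℝ => D v + ε * N v) (𝓝[>] 0) (𝓝 (D v)) :=
    (Continuous.tendsto' (by fun_prop) 0 _ (by simp)).mono_left nhdsWithin_le_nhds
  exact ge_of_tendsto hlim (eventually_nhdsWithin_of_forall hslope)

def finiteMeasureCone (α : Type*) [MeasurableSpace α] : Set (SignedMeasure α) :=
  {ν | ∃ (μ : Measure α) (_ : IsFiniteMeasure μ), μ.toSignedMeasure = ν}

theorem tvNorm_smul (t : ℝ≥0) (ν : SignedMeasure ℝ) : tvNorm (t • ν) = t * tvNorm ν := by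
  rw [tvNorm, tvNorm, SignedMeasure.totalVariation, SignedMeasure.totalVariation,
    SignedMeasure.toJordanDecomposition_smul, JordanDecomposition.smul_posPart,
    JordanDecomposition.smul_negPart, ← smul_add, Measure.smul_apply, ENNReal.toReal_smul,
    NNReal.smul_def, smul_eq_mul]

theorem signedIntegral_smul (f : ℝ → ℝ) (t : ℝ≥0) (ν : SignedMeasure ℝ) :
    signedIntegral f (t • ν) = t * signedIntegral f ν := by
  rw [signedIntegral, signedIntegral, SignedMeasure.toJordanDecomposition_smul,
    JordanDecomposition.smul_posPart, JordanDecomposition.smul_negPart,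
    integral_smul_nnreal_measure, integral_smul_nnreal_measure, NNReal.smul_def, NNReal.smul_def,
    smul_eq_mul, smul_eq_mul, mul_sub]

theorem signedIntegral_neg (f : ℝ → ℝ) (ν : SignedMeasure ℝ) :
    signedIntegral f (-ν) = -signedIntegral f ν := by
  simp [signedIntegral, SignedMeasure.toJordanDecomposition_neg]

theorem MeasureTheory.Measure.toJordanDecomposition_toSignedMeasure {α : Type*} [MeasurableSpace α]
    (μ : Measure α) [IsFiniteMeasure μ] :
    μ.toSignedMeasure.toJordanDecomposition = ⟨μ, 0, .zero_right⟩ := by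
  rw [← JordanDecomposition.toJordanDecomposition_toSignedMeasure ⟨μ, 0, .zero_right⟩]
  simp [JordanDecomposition.toSignedMeasure, Measure.toSignedMeasure_zero]

theorem signedIntegral_toSignedMeasure (f : ℝ → ℝ) (μ : Measure ℝ) [IsFiniteMeasure μ] :
    signedIntegral f μ.toSignedMeasure = ∫ x, f x ∂μ := by
  simp [signedIntegral, Measure.toJordanDecomposition_toSignedMeasure]

theorem toSignedMeasure_add_smul_mem_finiteMeasureCone {α : Type*} [MeasurableSpace α]
    (μ ρ : Measure α) [IsFiniteMeasure μ] [IsFiniteMeasure ρ] (t : ℝ≥0) :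
    μ.toSignedMeasure + t • ρ.toSignedMeasure ∈ finiteMeasureCone α :=
  ⟨μ + t • ρ, inferInstance, by rw [Measure.toSignedMeasure_add, Measure.toSignedMeasure_smul]⟩

theorem toSignedMeasure_sub_smul_mem_finiteMeasureCone {α : Type*} [MeasurableSpace α]
    (μ : Measure α) [IsFiniteMeasure μ] {t : ℝ≥0} (ht : t ≤ 1) :
    μ.toSignedMeasure + t • -μ.toSignedMeasure ∈ finiteMeasureCone α := by
  refine ⟨(1 - t) • μ, inferInstance, ?_⟩
  rw [Measure.toSignedMeasure_smul, smul_neg, ← sub_eq_add_neg, eq_sub_iff_add_eq, ← add_smul,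
    tsub_add_cancel_of_le ht, one_smul]

/-- Theorem 1 of the paper: if `L` is strongly differentiable at a finite nonnegative
measure `Λ` with bounded gradient function `∇L(·;Λ)` (so `DL(Λ)[ν] = ∫ ∇L(x;Λ) ν(dx)`),
and `Λ` is a local minimizer (in total variation norm) of `L` over the cone of finite
nonnegative measures, then `∇L(x;Λ) ≥ 0` for all `x` and `∇L(x;Λ) = 0` for `Λ`-a.e. `x`. -/
theorem necessary_conditions_measure_minimizer
    (L : SignedMeasure ℝ → ℝ) (Λ : Measure ℝ) [IsFiniteMeasure Λ]
    (g : ℝ → ℝ) (hgmeas : Measurable g) (hgbd : ∃ C : ℝ, ∀ x, |g x| ≤ C)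
    (hdiff : ∀ ε > 0, ∃ δ > 0, ∀ ν : SignedMeasure ℝ, tvNorm ν ≤ δ →
      |L (Λ.toSignedMeasure + ν) - L Λ.toSignedMeasure - signedIntegral g ν| ≤ ε * tvNorm ν)
    (hmin : ∃ δ > 0, ∀ (Λ' : Measure ℝ) [IsFiniteMeasure Λ'],
      tvNorm (Λ'.toSignedMeasure - Λ.toSignedMeasure) ≤ δ →
        L Λ.toSignedMeasure ≤ L Λ'.toSignedMeasure) :
    (∀ x, 0 ≤ g x) ∧ (∀ᵐ x ∂Λ, g x = 0) := by
  have hminOn : ∃ δ > 0, ∀ ν, Λ.toSignedMeasure + ν ∈ finiteMeasureCone ℝ → tvNorm ν ≤ δ →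
      L Λ.toSignedMeasure ≤ L (Λ.toSignedMeasure + ν) := by
    obtain ⟨δ, hδ, hΛ⟩ := hmin
    refine ⟨δ, hδ, fun ν ⟨Λ', _, hΛ'⟩ hν => ?_⟩
    rw [← hΛ']
    exact hΛ Λ' (by rwa [hΛ', add_sub_cancel_left])
  have hdir : ∀ ν, (∀ᶠ t in 𝓝[>] (0 : ℝ≥0), Λ.toSignedMeasure + t • ν ∈ finiteMeasureCone ℝ) →
      0 ≤ signedIntegral g ν := fun ν hν =>
    nonneg_of_isLocalMinOn_of_eventually_mem_ray hdiff (signedIntegral_smul g · ν)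
      (tvNorm_smul · ν) hminOn hν
  have hg : ∀ x, 0 ≤ g x := fun x => by
    simpa [signedIntegral_toSignedMeasure] using hdir (Measure.dirac x).toSignedMeasure
      (Eventually.of_forall (toSignedMeasure_add_smul_mem_finiteMeasureCone Λ _))
  have hint_nonpos : ∫ x, g x ∂Λ ≤ 0 := by
    have := hdir (-Λ.toSignedMeasure) <| eventually_of_mem (Ioo_mem_nhdsGT one_pos) fun _ ht =>
      toSignedMeasure_sub_smul_mem_finiteMeasureCone Λ ht.2.le
    rwa [signedIntegral_neg, signedIntegral_toSignedMeasure, neg_nonneg] at this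
  obtain ⟨C, hC⟩ := hgbd
  have hint : Integrable g Λ :=
    .of_bound hgmeas.aestronglyMeasurable C (Eventually.of_forall hC)
  exact ⟨hg, (integral_eq_zero_iff_of_nonneg hg hint).mp
    (le_antisymm hint_nonpos (integral_nonneg hg))⟩
end

section
/- Let u : ℝ^j → ℝ be a bounded measurable symmetric function and define G(Λ) = ∫_{ℝ^j} u(x_1,...,x_j) Λ(dx_1)⋯Λ(dx_j) on finite signed measures Λ. Then G is Fréchet differentiable at every finite measure Λ with gradient function ∇G(x;Λ) = j ∫_{ℝ^{j−1}} u(x, x_1,...,x_{j−1}) Λ(dx_1)⋯Λ(dx_{j−1}); that is, G(Λ+ν) − G(Λ) = ∫ ∇G(x;Λ) ν(dx) + o(‖ν‖). -/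
open MeasureTheory

/-- The `j`-fold product integral `∫ u d(p - q)^{⊗j}` of `u` against the `j`-fold product
of the signed measure `p - q`, expanded by multilinearity over sign patterns. -/
noncomputable def prodIntegralDiff (j : ℕ) (u : (Fin j → ℝ) → ℝ) (p q : Measure ℝ) : ℝ :=
  ∑ s : Fin j → Bool,
    (-1 : ℝ) ^ (Finset.univ.filter fun i => s i = false).card *
      ∫ x : Fin j → ℝ, u x ∂(Measure.pi fun i => if s i then p else q)

/-!
View `∫ u d⊗ᵢ (pᵢ - qᵢ)` as an `ℕ`-multilinear function of `j` pairs `(pᵢ, qᵢ)` of finite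
measures. Expanding it at `(Λ, 0) + (ν⁺, ν⁻)` over the subsets of slots that carry `ν` gives
`G(Λ)`, then the `j` terms linear in `ν`, which the symmetry of `u` makes all equal to
`∫ ∇G(x; Λ)/j ν(dx)`, and finally the terms with at least two slots carrying `ν`, each bounded
by `C (‖Λ‖ + 1)^j ‖ν‖²`.
-/

open Function

theorem MultilinearMap.map_add_sub_sub_linearDeriv {R ι N : Type*} {M : ι → Type*} [Semiring R]
    [∀ i, AddCommMonoid (M i)] [∀ i, Module R (M i)] [AddCommGroup N] [Module R N]
    [Fintype ι] [DecidableEq ι] (f : MultilinearMap R M N) (x h : ∀ i, M i) :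
    f (x + h) - f x - f.linearDeriv x h =
      ∑ s ∈ Finset.univ.filter (fun s : Finset ι => 2 ≤ s.card), f (s.piecewise h x) := by
  have hsmall : Finset.univ.filter (fun s : Finset ι => ¬ 2 ≤ s.card) =
      insert ∅ (Finset.univ.map ⟨singleton, Finset.singleton_injective⟩) := by
    ext s
    have : s.card ≤ 1 ↔ s.card = 0 ∨ s.card = 1 := by omega
    simp [this, Finset.card_eq_one, eq_comm]
  rw [add_comm x h, f.map_add_univ, linearDeriv_apply,
    ← Finset.sum_filter_add_sum_filter_not Finset.univ (fun s => 2 ≤ s.card), hsmall,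
    Finset.sum_insert (by simp), Finset.sum_map]
  simp only [Finset.piecewise_empty, Finset.piecewise_singleton, Embedding.coeFn_mk]
  abel

lemma exists_pos_forall_abs_le_mul_of_abs_le_sq {β : Type*} {E r : β → ℝ} {K : ℝ}
    (hr : ∀ b, 0 ≤ r b) (hE : ∀ b, r b ≤ 1 → |E b| ≤ K * r b ^ 2) :
    ∀ ε > 0, ∃ δ > 0, ∀ b, r b ≤ δ → |E b| ≤ ε * r b := by
  intro ε hε
  refine ⟨min 1 (ε / (|K| + 1)), by positivity, fun b hb => ?_⟩
  have hr1 : r b ≤ 1 := hb.trans (min_le_left _ _)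
  have hrε : r b * (|K| + 1) ≤ ε :=
    (le_div_iff₀ (by positivity)).1 (hb.trans (min_le_right _ _))
  calc |E b| ≤ K * r b ^ 2 := hE b hr1
    _ ≤ (r b * (|K| + 1)) * r b := by nlinarith [le_abs_self K, hr b]
    _ ≤ ε * r b := mul_le_mul_of_nonneg_right hrε (hr b)

namespace MeasureTheory

variable {ι α : Type*} [Fintype ι] [MeasurableSpace α]

lemma Measure.pi_update_add [DecidableEq ι] (μ : ι → FiniteMeasure α) (i : ι)
    (a b : FiniteMeasure α) :
    Measure.pi (fun k => (update μ i (a + b) k : Measure α)) =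
      Measure.pi (fun k => (update μ i a k : Measure α)) +
        Measure.pi (fun k => (update μ i b k : Measure α)) := by
  refine Measure.pi_eq fun s _ => ?_
  have slot : ∀ c : FiniteMeasure α, ∏ k, (update μ i c k : Measure α) (s k) =
      (c : Measure α) (s i) * ∏ k ∈ Finset.univ.erase i, (μ k : Measure α) (s k) := by
    intro c
    rw [← Finset.mul_prod_erase _ _ (Finset.mem_univ i), update_self]
    congr 1
    exact Finset.prod_congr rfl fun k hk => by rw [update_of_ne (Finset.ne_of_mem_erase hk)]
  rw [Measure.add_apply, Measure.pi_pi, Measure.pi_pi, slot, slot, slot,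
    FiniteMeasure.toMeasure_add, Measure.add_apply, add_mul]

lemma FiniteMeasure.real_pi_univ (μ : ι → FiniteMeasure α) :
    (Measure.pi fun i => (μ i : Measure α)).real Set.univ = ∏ i, ((μ i).mass : ℝ) := by
  rw [measureReal_def, Measure.pi_univ, ENNReal.toReal_prod]
  rfl

noncomputable def SignedMeasure.jordanPair (ν : SignedMeasure α) :
    FiniteMeasure α × FiniteMeasure α :=
  (⟨ν.toJordanDecomposition.posPart, inferInstance⟩,
    ⟨ν.toJordanDecomposition.negPart, inferInstance⟩)

end MeasureTheory

lemma tvNorm_eq_mass_add_mass (ν : SignedMeasure ℝ) :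
    tvNorm ν = ν.jordanPair.1.mass + ν.jordanPair.2.mass := by
  rw [tvNorm, SignedMeasure.totalVariation, Measure.add_apply,
    ENNReal.toReal_add (measure_ne_top _ _) (measure_ne_top _ _)]
  rfl

section piIntegral

variable {ι α : Type*} [Fintype ι] [MeasurableSpace α]

noncomputable def piIntegral (u : (ι → α) → ℝ) (μ : ι → FiniteMeasure α) : ℝ :=
  ∫ x, u x ∂Measure.pi fun i => (μ i : Measure α)

variable {u : (ι → α) → ℝ}

lemma piIntegral_update_add [DecidableEq ι] (hu : Measurable u) {C : ℝ} (hC : ∀ x, |u x| ≤ C)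
    (μ : ι → FiniteMeasure α) (i : ι) (a b : FiniteMeasure α) :
    piIntegral u (update μ i (a + b)) =
      piIntegral u (update μ i a) + piIntegral u (update μ i b) := by
  rw [piIntegral, Measure.pi_update_add,
    integral_add_measure (.of_bound hu.aestronglyMeasurable C (ae_of_all _ hC))
      (.of_bound hu.aestronglyMeasurable C (ae_of_all _ hC))]
  rfl

lemma abs_piIntegral_le {C : ℝ} (hC : ∀ x, |u x| ≤ C) (μ : ι → FiniteMeasure α) :
    |piIntegral u μ| ≤ C * ∏ i, ((μ i).mass : ℝ) := by
  rw [← FiniteMeasure.real_pi_univ]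
  exact norm_integral_le_of_norm_le_const (ae_of_all _ hC : ∀ᵐ x ∂_, ‖u x‖ ≤ C)

noncomputable def piIntegralMultilinear (u : (ι → α) → ℝ) (hu : Measurable u)
    (hbd : ∃ C, ∀ x, |u x| ≤ C) : MultilinearMap ℕ (fun _ : ι => FiniteMeasure α) ℝ where
  toFun := piIntegral u
  map_update_add' μ i := piIntegral_update_add hu hbd.choose_spec μ i
  map_update_smul' μ i c a :=
    map_nsmul (AddMonoidHom.mk' (fun a => piIntegral u (update μ i a))
      (piIntegral_update_add hu hbd.choose_spec μ i)) c a

lemma piIntegral_update_const {n : ℕ} {u : (Fin (n + 1) → α) → ℝ} (hu : Measurable u) {C : ℝ}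
    (hC : ∀ x, |u x| ≤ C) (hsym : ∀ (σ : Equiv.Perm (Fin (n + 1))) x, u (x ∘ σ) = u x)
    (L μ : FiniteMeasure α) (i : Fin (n + 1)) :
    piIntegral u (update (fun _ => L) i μ) =
      ∫ x, ∫ z, u (Fin.cons x z) ∂Measure.pi (fun _ => (L : Measure α)) ∂(μ : Measure α) := by
  set e := MeasurableEquiv.piFinSuccAbove (fun _ => α) i
  have hins : ∀ p, u (e.symm p) = u (Fin.cons p.1 p.2) := fun p => by
    change u (i.insertNth p.1 p.2) = _
    rw [← Fin.cons_comp_cycleRange, hsym]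
  calc piIntegral u (update (fun _ => L) i μ)
      = ∫ p, u (e.symm p) ∂(μ : Measure α).prod (Measure.pi fun _ => (L : Measure α)) := by
        have hμ := measurePreserving_piFinSuccAbove
          (fun k => (update (fun _ => L) i μ k : Measure α)) i
        simp only [update_self, ne_eq, Fin.succAbove_ne, not_false_eq_true, update_of_ne] at hμ
        rw [piIntegral, ← hμ.integral_comp']
        simp only [e, MeasurableEquiv.symm_apply_apply]
    _ = ∫ x, ∫ z, u (e.symm (x, z)) ∂Measure.pi (fun _ => (L : Measure α)) ∂(μ : Measure α) :=
        integral_prod _ (.of_bound (hu.comp e.symm.measurable).aestronglyMeasurable C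
          (ae_of_all _ fun _ => hC _))
    _ = _ := by simp only [hins]

end piIntegral

section signedPiIntegral

variable {ι α : Type*} [Fintype ι] [DecidableEq ι] [MeasurableSpace α] {u : (ι → α) → ℝ}

/-- `∫ u d⊗ᵢ (pᵢ - qᵢ)`, the pair `(pᵢ, qᵢ)` encoding the signed measure `pᵢ - qᵢ`. -/
noncomputable def signedPiIntegral (u : (ι → α) → ℝ) (hu : Measurable u)
    (hbd : ∃ C, ∀ x, |u x| ≤ C) :
    MultilinearMap ℕ (fun _ : ι => FiniteMeasure α × FiniteMeasure α) ℝ :=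
  ∑ s : ι → Bool, (-1 : ℝ) ^ (Finset.univ.filter fun i => s i = false).card •
    (piIntegralMultilinear u hu hbd).compLinearMap
      fun i => if s i then LinearMap.fst ℕ _ _ else LinearMap.snd ℕ _ _

variable (hu : Measurable u) (hbd : ∃ C, ∀ x, |u x| ≤ C)

lemma signedPiIntegral_apply (m : ι → FiniteMeasure α × FiniteMeasure α) :
    signedPiIntegral u hu hbd m = ∑ s : ι → Bool,
      (-1 : ℝ) ^ (Finset.univ.filter fun i => s i = false).card *
        piIntegral u (fun i => if s i then (m i).1 else (m i).2) := by
  simp only [signedPiIntegral, sum_apply, smul_apply, MultilinearMap.compLinearMap_apply,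
    smul_eq_mul]
  refine Finset.sum_congr rfl fun s _ => ?_
  congr 1
  exact congrArg (piIntegral u) (funext fun i => by split_ifs <;> rfl)

lemma signedPiIntegral_eq_single (m : ι → FiniteMeasure α × FiniteMeasure α)
    (s₀ : ι → Bool) (h : ∀ i, (if s₀ i then (m i).2 else (m i).1) = 0) :
    signedPiIntegral u hu hbd m = (-1 : ℝ) ^ (Finset.univ.filter fun i => s₀ i = false).card *
      piIntegral u (fun i => if s₀ i then (m i).1 else (m i).2) := by
  rw [signedPiIntegral_apply, Finset.sum_eq_single_of_mem s₀ (Finset.mem_univ _)]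
  intro s _ hs
  obtain ⟨k, hk⟩ := Function.ne_iff.1 hs
  have hzero : (if s k then (m k).1 else (m k).2) = 0 := by
    have := h k
    cases h₀ : s₀ k <;> cases h₁ : s k <;> simp_all
  exact mul_eq_zero_of_right _ ((piIntegralMultilinear u hu hbd).map_coord_zero k hzero)

lemma signedPiIntegral_fst_zero (μ : ι → FiniteMeasure α) :
    signedPiIntegral u hu hbd (fun i => (μ i, 0)) = piIntegral u μ := by
  rw [signedPiIntegral_eq_single hu hbd _ (fun _ => true) fun _ => rfl]
  simp

lemma signedPiIntegral_update_fst_zero (μ : ι → FiniteMeasure α) (i : ι)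
    (p q : FiniteMeasure α) :
    signedPiIntegral u hu hbd (update (fun k => (μ k, 0)) i (p, q)) =
      piIntegral u (update μ i p) - piIntegral u (update μ i q) := by
  have hpq : (p, q) = (p, 0) + (0, q) := by simp
  rw [hpq, MultilinearMap.map_update_add, sub_eq_add_neg]
  congr 1
  · rw [signedPiIntegral_eq_single hu hbd _ (fun _ => true) fun k => by
      rcases eq_or_ne k i with rfl | hk <;> simp [*]]
    convert one_mul (piIntegral u (update μ i p)) using 2
    · simp
    · congr 1
      funext k
      rcases eq_or_ne k i with rfl | hk <;> simp [*]
  · rw [signedPiIntegral_eq_single hu hbd _ (update (fun _ => true) i false) fun k => by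
      rcases eq_or_ne k i with rfl | hk <;> simp [*]]
    convert neg_one_mul (piIntegral u (update μ i q)) using 2
    · simp [update_apply, Finset.filter_eq']
    · congr 1
      funext k
      rcases eq_or_ne k i with rfl | hk <;> simp [*]

lemma abs_signedPiIntegral_le {C : ℝ} (hC : ∀ x, |u x| ≤ C)
    (m : ι → FiniteMeasure α × FiniteMeasure α) :
    |signedPiIntegral u hu ⟨C, hC⟩ m| ≤ C * ∏ i, (((m i).1.mass : ℝ) + (m i).2.mass) := by
  calc |signedPiIntegral u hu ⟨C, hC⟩ m|
      ≤ ∑ s : ι → Bool, C * ∏ i, (((if s i then (m i).1 else (m i).2).mass : ℝ)) := by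
        rw [signedPiIntegral_apply]
        refine (Finset.abs_sum_le_sum_abs _ _).trans (Finset.sum_le_sum fun s _ => ?_)
        rw [abs_mul, abs_pow, abs_neg, abs_one, one_pow, one_mul]
        exact abs_piIntegral_le hC _
    _ = C * ∏ i, (((m i).1.mass : ℝ) + (m i).2.mass) := by
        rw [← Finset.mul_sum,
          ← Fintype.prod_sum fun i (b : Bool) => ((if b then (m i).1 else (m i).2).mass : ℝ)]
        simp only [Fintype.sum_bool, if_true, Bool.false_eq_true, if_false]

lemma abs_signedPiIntegral_add_sub_sub_linearDeriv_le {C : ℝ} (hC0 : 0 ≤ C)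
    (hC : ∀ x, |u x| ≤ C) (L p q : FiniteMeasure α) (hpq : (p.mass : ℝ) + q.mass ≤ 1) :
    |signedPiIntegral u hu ⟨C, hC⟩ ((fun _ => (L, 0)) + fun _ => (p, q)) -
        signedPiIntegral u hu ⟨C, hC⟩ (fun _ => (L, 0)) -
        (signedPiIntegral u hu ⟨C, hC⟩).linearDeriv (fun _ => (L, 0)) (fun _ => (p, q))| ≤
      2 ^ Fintype.card ι * C * (L.mass + 1) ^ Fintype.card ι * ((p.mass : ℝ) + q.mass) ^ 2 := by
  set r : ℝ := p.mass + q.mass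
  have hr0 : 0 ≤ r := by positivity
  have hterm : ∀ s : Finset ι, 2 ≤ s.card →
      |signedPiIntegral u hu ⟨C, hC⟩ (s.piecewise (fun _ => (p, q)) fun _ => (L, 0))| ≤
        C * (L.mass + 1) ^ Fintype.card ι * r ^ 2 := by
    intro s hs
    refine (abs_signedPiIntegral_le hu hC _).trans ?_
    have hprod : ∏ i, ((((s.piecewise (fun _ => (p, q)) fun _ => (L, 0)) i).1.mass : ℝ) +
        ((s.piecewise (fun _ => (p, q)) fun _ => (L, 0)) i).2.mass) =
        r ^ s.card * (L.mass : ℝ) ^ sᶜ.card := by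
      rw [← Finset.prod_mul_prod_compl s, ← Finset.prod_const, ← Finset.prod_const]
      congr 1 <;> refine Finset.prod_congr rfl fun i hi => ?_
      · simp [Finset.piecewise_eq_of_mem _ _ _ hi, r]
      · simp [Finset.piecewise_eq_of_notMem _ _ _ (Finset.mem_compl.1 hi)]
    have hr : r ^ s.card ≤ r ^ 2 := pow_le_pow_of_le_one hr0 hpq hs
    have hL : (L.mass : ℝ) ^ sᶜ.card ≤ (L.mass + 1) ^ Fintype.card ι :=
      (pow_le_pow_left₀ (by positivity) (by linarith) _).trans
        (pow_le_pow_right₀ (by linarith) (Finset.card_le_univ _))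
    rw [hprod, mul_assoc, mul_comm (r ^ s.card)]
    exact mul_le_mul_of_nonneg_left (mul_le_mul hL hr (by positivity) (by positivity)) hC0
  rw [MultilinearMap.map_add_sub_sub_linearDeriv]
  calc _ ≤ ∑ s ∈ Finset.univ.filter (fun s : Finset ι => 2 ≤ s.card),
        C * (L.mass + 1) ^ Fintype.card ι * r ^ 2 :=
        (Finset.abs_sum_le_sum_abs _ _).trans (Finset.sum_le_sum fun s hs =>
          hterm s (Finset.mem_filter.1 hs).2)
    _ ≤ 2 ^ Fintype.card ι * (C * (L.mass + 1) ^ Fintype.card ι * r ^ 2) := by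
        rw [Finset.sum_const, nsmul_eq_mul]
        gcongr
        exact_mod_cast (Finset.card_filter_le _ _).trans_eq (by simp)
    _ = _ := by ring

end signedPiIntegral

lemma signedPiIntegral_linearDeriv_const {α : Type*} [MeasurableSpace α] {n : ℕ}
    {u : (Fin (n + 1) → α) → ℝ} (hu : Measurable u) {C : ℝ} (hC : ∀ x, |u x| ≤ C)
    (hsym : ∀ (σ : Equiv.Perm (Fin (n + 1))) x, u (x ∘ σ) = u x) (L p q : FiniteMeasure α) :
    (signedPiIntegral u hu ⟨C, hC⟩).linearDeriv (fun _ => (L, 0)) (fun _ => (p, q)) =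
      (∫ x, (n + 1 : ℝ) * ∫ z, u (Fin.cons x z) ∂Measure.pi (fun _ => (L : Measure α)) ∂p) -
        ∫ x, (n + 1 : ℝ) * ∫ z, u (Fin.cons x z) ∂Measure.pi (fun _ => (L : Measure α)) ∂q := by
  simp only [MultilinearMap.linearDeriv_apply,
    signedPiIntegral_update_fst_zero hu ⟨C, hC⟩ (fun _ => L), piIntegral_update_const hu hC hsym,
    Finset.sum_const, Finset.card_univ, Fintype.card_fin, nsmul_eq_mul, integral_const_mul,
    mul_sub]
  push_cast
  rfl

lemma prodIntegralDiff_eq_signedPiIntegral {j : ℕ} {u : (Fin j → ℝ) → ℝ} (hu : Measurable u)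
    (hbd : ∃ C, ∀ x, |u x| ≤ C) (p q : FiniteMeasure ℝ) :
    prodIntegralDiff j u p q = signedPiIntegral u hu hbd (fun _ => (p, q)) := by
  rw [signedPiIntegral_apply]
  refine Finset.sum_congr rfl fun s _ => ?_
  congr 1
  exact congrArg (fun μ => ∫ x, u x ∂Measure.pi μ)
    (funext fun i => by dsimp only; split_ifs <;> rfl)

/-- For a bounded measurable symmetric `u : ℝ^j → ℝ` (`j = n+1`), the functional
`G(η) = ∫ u dη^{⊗j}` is Fréchet differentiable (w.r.t. total variation) at every finite
nonnegative measure `Λ`, with gradient function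
`∇G(x;Λ) = j ∫_{ℝ^{j-1}} u(x, x_1,…,x_{j-1}) Λ(dx_1)⋯Λ(dx_{j-1})`:
`G(Λ+ν) - G(Λ) = ∫ ∇G(x;Λ) ν(dx) + o(‖ν‖)`. Here `Λ + ν` is represented via the Jordan
decomposition of `ν` as `(Λ + ν⁺) - ν⁻`. -/
theorem multilinear_frechet_derivative (n : ℕ) (u : (Fin (n + 1) → ℝ) → ℝ)
    (humeas : Measurable u) (hubd : ∃ C : ℝ, ∀ x, |u x| ≤ C)
    (husym : ∀ (σ : Equiv.Perm (Fin (n + 1))) (x : Fin (n + 1) → ℝ), u (x ∘ σ) = u x)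
    (Λ : Measure ℝ) [IsFiniteMeasure Λ] :
    ∀ ε > 0, ∃ δ > 0, ∀ ν : SignedMeasure ℝ, tvNorm ν ≤ δ →
      |prodIntegralDiff (n + 1) u (Λ + ν.toJordanDecomposition.posPart)
          ν.toJordanDecomposition.negPart -
        (∫ x : Fin (n + 1) → ℝ, u x ∂(Measure.pi fun _ => Λ)) -
        signedIntegral
          (fun x => (n + 1 : ℝ) *
            ∫ z : Fin n → ℝ, u (Fin.cons x z) ∂(Measure.pi fun _ => Λ)) ν| ≤
        ε * tvNorm ν := by
  obtain ⟨C, hC⟩ := hubd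
  let L : FiniteMeasure ℝ := ⟨Λ, inferInstance⟩
  refine exists_pos_forall_abs_le_mul_of_abs_le_sq
    (K := 2 ^ (n + 1) * C * (L.mass + 1) ^ (n + 1)) (fun ν => ENNReal.toReal_nonneg)
    fun ν hν => ?_
  have hG : prodIntegralDiff (n + 1) u (Λ + ν.toJordanDecomposition.posPart)
      ν.toJordanDecomposition.negPart =
        signedPiIntegral u humeas ⟨C, hC⟩ ((fun _ => (L, 0)) + fun _ => ν.jordanPair) :=
    (prodIntegralDiff_eq_signedPiIntegral humeas ⟨C, hC⟩ (L + ν.jordanPair.1)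
      ν.jordanPair.2).trans (congrArg _ (funext fun _ => Prod.ext rfl (zero_add _).symm))
  have key := abs_signedPiIntegral_add_sub_sub_linearDeriv_le humeas
    ((abs_nonneg _).trans (hC 0)) hC L _ _ (tvNorm_eq_mass_add_mass ν ▸ hν)
  rw [signedPiIntegral_fst_zero, signedPiIntegral_linearDeriv_const humeas hC husym,
    Fintype.card_fin, ← tvNorm_eq_mass_add_mass] at key
  rw [hG]
  exact key
end

section
/- Expanding the multilinear functional: for a bounded symmetric function u of j variables and finite signed measures Λ, ν, one has ∫ u d(Λ+ν)^{⊗j} − ∫ u dΛ^{⊗j} = j ∫_{ℝ^j} u(x, x_1,...,x_{j−1}) ν(dx) Λ(dx_1)⋯Λ(dx_{j−1}) + R, where |R| ≤ C ‖ν‖^2 for a constant C depending only on ‖u‖_∞, j, ‖Λ‖ and ‖ν‖ bounded. -/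
open MeasureTheory

/-!
Expanding `(Λ + ν)^{⊗j} = (Λ + ν⁺ - ν⁻)^{⊗j}` multilinearly writes the left-hand side as a sum over
patterns `c : Fin j → {Λ, ν⁺, ν⁻}`. The pattern without a perturbed coordinate gives
`∫ u dΛ^{⊗j}`; by symmetry of `u` and Fubini, the `2j` patterns with exactly one perturbed
coordinate add up to `j ∫∫ u(x, ·) dΛ^{⊗(j-1)} dν(x)`. Each of the at most `3^j` remaining
patterns has two coordinates of mass at most `‖ν‖`, so it contributes at most
`‖u‖_∞ max(1, ‖Λ‖, ‖ν‖)^j ‖ν‖²`.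
-/

open MeasureTheory Finset Function

section OptionPatterns

variable {ι β : Type*} [DecidableEq ι]

theorem eq_update_none_of_card_le_one [Fintype ι] {c : ι → Option β}
    (hc : #{i | c i ≠ none} ≤ 1) {i : ι} {b : β} (hi : c i = some b) :
    c = update (fun _ => none) i (some b) := by
  rw [eq_update_iff]
  refine ⟨hi, fun k hk => ?_⟩
  by_contra h
  exact hk (card_le_one.1 hc k (by simpa using h) i (by simp [hi]))

theorem update_none_injective :
    Injective fun p : ι × β => update (fun _ => (none : Option β)) p.1 (some p.2) := by
  rintro ⟨i, b⟩ ⟨i', b'⟩ h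
  have hi := congrFun h i
  by_cases hii' : i = i'
  · subst hii'
    simp_all
  · simp [hii'] at hi

theorem Fintype.sum_pi_option_eq_const_add_update_add {M : Type*} [AddCommMonoid M] [Fintype ι]
    [Fintype β] [DecidableEq β] (F : (ι → Option β) → M) :
    ∑ c, F c = F (fun _ => none) + ∑ i, ∑ b, F (update (fun _ => none) i (some b)) +
      ∑ c with 1 < #{i | c i ≠ none}, F c := by
  set Φ : ι × β → ι → Option β := fun p => update (fun _ => none) p.1 (some p.2)
  have hlow : ({c | ¬1 < #{i | c i ≠ none}} : Finset (ι → Option β)) =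
      insert (fun _ => none) (univ.image Φ) := by
    ext c
    simp only [not_lt, mem_filter, mem_univ, true_and, mem_insert, mem_image, Prod.exists]
    constructor
    · intro hc
      by_cases h : ∃ i, c i ≠ none
      · obtain ⟨i, hi⟩ := h
        obtain ⟨b, hb⟩ := Option.ne_none_iff_exists'.1 hi
        exact Or.inr ⟨i, b, (eq_update_none_of_card_le_one hc hb).symm⟩
      · simp only [not_exists, not_not] at h
        exact Or.inl (funext h)
    · rintro (rfl | ⟨i, b, rfl⟩)
      · simp
      · refine card_le_one.2 fun k hk l hl => ?_
        simp only [mem_filter, Φ, update_apply] at hk hl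
        split_ifs at hk hl <;> simp_all
  have hnone : (fun _ => none) ∉ univ.image Φ := by
    simp only [mem_image, not_exists]
    rintro p ⟨-, h⟩
    simpa [Φ] using congrFun h p.1
  rw [← sum_filter_not_add_sum_filter univ (fun c => 1 < #{i | c i ≠ none}), hlow,
    sum_insert hnone, sum_image update_none_injective.injOn, ← univ_product_univ, sum_product]

end OptionPatterns

theorem Finset.prod_le_pow_card_mul_sq {ι : Type*} [Fintype ι] [DecidableEq ι] {x : ι → ℝ}
    {L ε : ℝ} (hx : ∀ i, 0 ≤ x i) (hL : ∀ i, x i ≤ L) (hL1 : 1 ≤ L) {a b : ι} (hab : a ≠ b)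
    (ha : x a ≤ ε) (hb : x b ≤ ε) : ∏ i, x i ≤ L ^ Fintype.card ι * ε ^ 2 := by
  have hrest : ∏ i ∈ (univ.erase a).erase b, x i ≤ L ^ Fintype.card ι :=
    calc ∏ i ∈ (univ.erase a).erase b, x i ≤ ∏ _i ∈ (univ.erase a).erase b, L :=
          prod_le_prod (fun i _ => hx i) fun i _ => hL i
      _ ≤ L ^ Fintype.card ι := by
          rw [prod_const]; exact pow_le_pow_right₀ hL1 (card_le_univ _)
  have hpair : x a * x b ≤ ε ^ 2 := by
    rw [sq]; exact mul_le_mul ha hb (hx b) ((hx a).trans ha)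
  rw [← mul_prod_erase _ _ (mem_univ a), ← mul_prod_erase _ _ (mem_erase.2 ⟨hab.symm, mem_univ b⟩),
    ← mul_assoc, mul_comm (L ^ _)]
  exact mul_le_mul hpair hrest (prod_nonneg fun i _ => hx i) (sq_nonneg ε)

section PiMeasure

variable {ι α κ κ' : Type*} [Fintype ι] [MeasurableSpace α]

theorem integrable_of_measurable_of_abs_le {μ : Measure α} [IsFiniteMeasure μ] {f : α → ℝ}
    {B : ℝ} (hf : Measurable f) (hB : ∀ x, |f x| ≤ B) : Integrable f μ :=
  .of_bound hf.aestronglyMeasurable B (ae_of_all _ fun x => (Real.norm_eq_abs _).trans_le (hB x))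

theorem abs_integral_pi_le {u : (ι → α) → ℝ} {B : ℝ} (hB : ∀ x, |u x| ≤ B)
    (μ : ι → Measure α) [∀ i, IsFiniteMeasure (μ i)] :
    |∫ x, u x ∂Measure.pi μ| ≤ B * ∏ i, (μ i Set.univ).toReal := by
  have h := norm_integral_le_of_norm_le_const (μ := Measure.pi μ)
    (.of_forall fun x => (Real.norm_eq_abs _).trans_le (hB x))
  rwa [measureReal_def, Measure.pi_univ, ENNReal.toReal_prod, Real.norm_eq_abs] at h

variable [DecidableEq ι]

theorem MeasureTheory.Measure.pi_finsetSum (μ : ι → κ → Measure α)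
    [∀ i k, IsFiniteMeasure (μ i k)] (t : ι → Finset κ) :
    Measure.pi (fun i => ∑ k ∈ t i, μ i k) =
      ∑ c ∈ Fintype.piFinset t, Measure.pi fun i => μ i (c i) := by
  refine Measure.pi_eq fun s _ => ?_
  simp only [Measure.coe_finsetSum, Finset.sum_apply, Measure.pi_pi]
  exact (prod_univ_sum t fun i k => μ i k (s i)).symm

/-- `∫ u d(∑ k, w k • m k)^{⊗ι}`, expanded by multilinearity. -/
noncomputable def weightedPiIntegral [Fintype κ] (u : (ι → α) → ℝ) (w : κ → ℝ)
    (m : κ → Measure α) : ℝ :=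
  ∑ c : ι → κ, (∏ i, w (c i)) * ∫ x, u x ∂Measure.pi fun i => m (c i)

noncomputable def weightedPiRemainder {β : Type*} [Fintype β] [DecidableEq β]
    (u : (ι → α) → ℝ) (w : Option β → ℝ) (m : Option β → Measure α) : ℝ :=
  ∑ c : ι → Option β with 1 < #{i | c i ≠ none},
    (∏ i, w (c i)) * ∫ x, u x ∂Measure.pi fun i => m (c i)

theorem prodIntegralDiff_eq_weightedPiIntegral (j : ℕ) (u : (Fin j → ℝ) → ℝ)
    (p q : Measure ℝ) :
    prodIntegralDiff j u p q =
      weightedPiIntegral u (fun b : Bool => if b then 1 else -1) (fun b => if b then p else q) := by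
  refine Fintype.sum_congr _ _ fun s => ?_
  rw [prod_ite, prod_const_one, prod_const, one_mul]
  simp

theorem weightedPiIntegral_eq_of_fiber [Fintype κ] [Fintype κ'] [DecidableEq κ]
    {u : (ι → α) → ℝ} {B : ℝ} (hu : Measurable u) (hB : ∀ x, |u x| ≤ B)
    (w : κ → ℝ) (m : κ → Measure α) (φ : κ' → κ) (m' : κ' → Measure α)
    [∀ k', IsFiniteMeasure (m' k')] (hm : ∀ k, m k = ∑ k' with φ k' = k, m' k') :
    weightedPiIntegral u w m = weightedPiIntegral u (w ∘ φ) m' := by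
  have hfiber (c : ι → κ) : Fintype.piFinset (fun i => univ.filter (φ · = c i)) =
      univ.filter fun c' : ι → κ' => (fun i => φ (c' i)) = c := by
    ext c'; simp [funext_iff]
  unfold weightedPiIntegral
  rw [← sum_fiberwise univ (fun (c' : ι → κ') i => φ (c' i))]
  refine Fintype.sum_congr _ _ fun c => ?_
  simp_rw [hm, Measure.pi_finsetSum, integral_finsetSum_measure fun c' _ =>
    integrable_of_measurable_of_abs_le hu hB, hfiber, mul_sum]
  refine sum_congr rfl fun c' hc' => ?_
  rw [← (mem_filter.1 hc').2]
  rfl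

theorem weightedPiIntegral_option_eq {β : Type*} [Fintype β] [DecidableEq β]
    (u : (ι → α) → ℝ) (w : Option β → ℝ) (m : Option β → Measure α) (hw : w none = 1) :
    weightedPiIntegral u w m = ∫ x, u x ∂Measure.pi (fun _ => m none) +
      ∑ i, ∑ b, w (some b) * ∫ x, u x ∂Measure.pi (update (fun _ => m none) i (m (some b))) +
      weightedPiRemainder u w m := by
  rw [weightedPiIntegral, weightedPiRemainder, Fintype.sum_pi_option_eq_const_add_update_add]
  simp [apply_update (fun _ => w), apply_update (fun _ => m), prod_update_of_mem, hw]

theorem abs_prod_mul_integral_pi_le [Fintype κ] {u : (ι → α) → ℝ} {B L ε : ℝ} (hB0 : 0 ≤ B)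
    (hB : ∀ x, |u x| ≤ B) (w : κ → ℝ) (m : κ → Measure α) [∀ k, IsFiniteMeasure (m k)]
    (hL : ∀ k, |w k| * (m k Set.univ).toReal ≤ L) (hL1 : 1 ≤ L) (c : ι → κ) {a b : ι}
    (hab : a ≠ b) (ha : |w (c a)| * (m (c a) Set.univ).toReal ≤ ε)
    (hb : |w (c b)| * (m (c b) Set.univ).toReal ≤ ε) :
    |(∏ i, w (c i)) * ∫ x, u x ∂Measure.pi fun i => m (c i)| ≤
      B * (L ^ Fintype.card ι * ε ^ 2) := by
  rw [abs_mul, abs_prod]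
  calc (∏ i, |w (c i)|) * |∫ x, u x ∂Measure.pi fun i => m (c i)|
      ≤ (∏ i, |w (c i)|) * (B * ∏ i, (m (c i) Set.univ).toReal) :=
        mul_le_mul_of_nonneg_left (abs_integral_pi_le hB _) (prod_nonneg fun i _ => abs_nonneg _)
    _ = B * ∏ i, |w (c i)| * (m (c i) Set.univ).toReal := by rw [prod_mul_distrib]; ring
    _ ≤ B * (L ^ Fintype.card ι * ε ^ 2) :=
        mul_le_mul_of_nonneg_left (prod_le_pow_card_mul_sq
          (fun i => mul_nonneg (abs_nonneg _) ENNReal.toReal_nonneg) (fun i => hL _) hL1 hab ha hb)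
          hB0

theorem abs_weightedPiRemainder_le {β : Type*} [Fintype β] [DecidableEq β]
    {u : (ι → α) → ℝ} {B L ε : ℝ} (hB0 : 0 ≤ B) (hB : ∀ x, |u x| ≤ B)
    (w : Option β → ℝ) (m : Option β → Measure α) [∀ k, IsFiniteMeasure (m k)]
    (hL : ∀ k, |w k| * (m k Set.univ).toReal ≤ L) (hL1 : 1 ≤ L)
    (hε : ∀ b, |w (some b)| * (m (some b) Set.univ).toReal ≤ ε) :
    |weightedPiRemainder u w m| ≤
      (Fintype.card β + 1) ^ Fintype.card ι * B * L ^ Fintype.card ι * ε ^ 2 := by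
  set S : Finset (ι → Option β) := {c | 1 < #{i | c i ≠ none}}
  have hterm : ∀ c ∈ S, |(∏ i, w (c i)) * ∫ x, u x ∂Measure.pi fun i => m (c i)| ≤
      B * (L ^ Fintype.card ι * ε ^ 2) := by
    intro c hc
    obtain ⟨a, ha, b, hb, hab⟩ := one_lt_card.1 (mem_filter.1 hc).2
    have hsmall : ∀ i ∈ ({i | c i ≠ none} : Finset ι),
        |w (c i)| * (m (c i) Set.univ).toReal ≤ ε := by
      intro i hi
      obtain ⟨k, hk⟩ := Option.ne_none_iff_exists'.1 (mem_filter.1 hi).2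
      rw [hk]; exact hε k
    exact abs_prod_mul_integral_pi_le hB0 hB w m hL hL1 c hab (hsmall a ha) (hsmall b hb)
  calc |weightedPiRemainder u w m|
      ≤ ∑ c ∈ S, |(∏ i, w (c i)) * ∫ x, u x ∂Measure.pi fun i => m (c i)| :=
        abs_sum_le_sum_abs _ _
    _ ≤ #S • (B * (L ^ Fintype.card ι * ε ^ 2)) := sum_le_card_nsmul _ _ _ hterm
    _ ≤ (Fintype.card (ι → Option β) : ℝ) * (B * (L ^ Fintype.card ι * ε ^ 2)) := by
        rw [nsmul_eq_mul]
        gcongr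
        exact card_le_univ _
    _ = _ := by
        simp only [Fintype.card_pi, Fintype.card_option, prod_const, card_univ]
        push_cast
        ring

end PiMeasure

theorem integral_pi_update_eq_integral_cons {α : Type*} [MeasurableSpace α] {n : ℕ}
    {u : (Fin (n + 1) → α) → ℝ} {B : ℝ} (hu : Measurable u) (hB : ∀ x, |u x| ≤ B)
    (hsym : ∀ (σ : Equiv.Perm (Fin (n + 1))) x, u (x ∘ σ) = u x)
    (Λ ρ : Measure α) [IsFiniteMeasure Λ] [IsFiniteMeasure ρ] (i : Fin (n + 1)) :
    ∫ x, u x ∂Measure.pi (update (fun _ => Λ) i ρ) =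
      ∫ x, ∫ z, u (Fin.cons x z) ∂Measure.pi (fun _ => Λ) ∂ρ := by
  have (k : Fin (n + 1)) : IsFiniteMeasure (update (fun _ => Λ) i ρ k) := by
    rw [update_apply]; split_ifs <;> infer_instance
  have hmp := measurePreserving_piFinSuccAbove (update (fun _ => Λ) i ρ) i
  simp only [update_self, update_of_ne (Fin.succAbove_ne i _)] at hmp
  rw [← hmp.symm.integral_comp', integral_prod]
  · -- `Fin.insertNth i x z` is a permutation of `Fin.cons x z`
    simp [Fin.insertNthEquiv, ← Fin.cons_comp_cycleRange, hsym]
  · exact integrable_of_measurable_of_abs_le (hu.comp (MeasurableEquiv.measurable _)) fun _ => hB _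

theorem toReal_posPart_add_toReal_negPart (ν : SignedMeasure ℝ) :
    (ν.toJordanDecomposition.posPart Set.univ).toReal +
      (ν.toJordanDecomposition.negPart Set.univ).toReal = tvNorm ν := by
  rw [tvNorm, SignedMeasure.totalVariation, Measure.add_apply,
    ENNReal.toReal_add (measure_ne_top _ _) (measure_ne_top _ _)]

theorem multilinear_expansion_second_order_remainder_general
    (n : ℕ) (B K M : ℝ) (hB : 0 ≤ B) :
    ∃ C : ℝ, ∀ (u : (Fin (n + 1) → ℝ) → ℝ), Measurable u → (∀ x, |u x| ≤ B) →
      (∀ (σ : Equiv.Perm (Fin (n + 1))) (x : Fin (n + 1) → ℝ), u (x ∘ σ) = u x) →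
      ∀ (Λ : Measure ℝ) (_ : IsFiniteMeasure Λ), (Λ Set.univ).toReal ≤ K →
      ∀ ν : SignedMeasure ℝ, tvNorm ν ≤ M →
        |prodIntegralDiff (n + 1) u (Λ + ν.toJordanDecomposition.posPart)
            ν.toJordanDecomposition.negPart -
          (∫ x : Fin (n + 1) → ℝ, u x ∂(Measure.pi fun _ => Λ)) -
          signedIntegral
            (fun x => (n + 1 : ℝ) *
              ∫ z : Fin n → ℝ, u (Fin.cons x z) ∂(Measure.pi fun _ => Λ)) ν| ≤
          C * tvNorm ν ^ 2 := by
  refine ⟨3 ^ (n + 1) * B * max 1 (max K M) ^ (n + 1), ?_⟩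
  intro u hu hu_le hsym Λ _ hΛ ν hν
  set P := ν.toJordanDecomposition.posPart
  set Q := ν.toJordanDecomposition.negPart
  set w : Option Bool → ℝ := fun o => if o.getD true then 1 else -1
  set m : Option Bool → Measure ℝ := fun o => o.elim Λ fun b => if b then P else Q
  have (k : Option Bool) : IsFiniteMeasure (m k) := by
    rcases k with _ | _ | _ <;>
      simp only [m, Option.elim, Bool.false_eq_true, if_true, if_false] <;> infer_instance
  have hexpand : prodIntegralDiff (n + 1) u (Λ + P) Q = weightedPiIntegral u w m := by
    rw [prodIntegralDiff_eq_weightedPiIntegral]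
    refine weightedPiIntegral_eq_of_fiber hu hu_le _ _ (fun o => o.getD true) m fun b => ?_
    cases b <;> simp [Fintype.sum_option, m, sum_filter]
  have hfirst : ∑ i, ∑ b, w (some b) *
      ∫ x, u x ∂Measure.pi (update (fun _ => m none) i (m (some b))) =
      signedIntegral (fun x => (n + 1 : ℝ) *
        ∫ z : Fin n → ℝ, u (Fin.cons x z) ∂(Measure.pi fun _ => Λ)) ν := by
    simp [w, m, integral_pi_update_eq_integral_cons hu hu_le hsym, signedIntegral,
      integral_const_mul]
    ring
  have hε (b : Bool) : |w (some b)| * (m (some b) Set.univ).toReal ≤ tvNorm ν := by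
    have := toReal_posPart_add_toReal_negPart ν
    cases b <;> simp [w, m] <;> linarith [(P Set.univ).toReal_nonneg, (Q Set.univ).toReal_nonneg]
  have hL : ∀ k, |w k| * (m k Set.univ).toReal ≤ max 1 (max K M) := by
    rintro (_ | b)
    · simpa [w, m] using hΛ.trans ((le_max_left K M).trans (le_max_right _ _))
    · exact (hε b).trans (hν.trans ((le_max_right K M).trans (le_max_right _ _)))
  rw [hexpand, weightedPiIntegral_option_eq u w m rfl, ← hfirst, show m none = Λ from rfl,
    show ∀ a F R : ℝ, a + F + R - a - F = R by intros; ring]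
  convert abs_weightedPiRemainder_le hB hu_le w m hL (le_max_left _ _) hε using 2
  norm_num

/-- Expansion of the multilinear functional: for a bounded symmetric `u` of `j = n+1`
variables and finite (signed) measures `Λ`, `ν`,
`∫ u d(Λ+ν)^{⊗j} - ∫ u dΛ^{⊗j} = j ∫ u(x,x_1,…,x_{j-1}) ν(dx) Λ(dx_1)⋯Λ(dx_{j-1}) + R`
with `|R| ≤ C ‖ν‖²`, where the constant `C` depends only on `‖u‖_∞ ≤ B`, `j`, `‖Λ‖ ≤ K`
and the bound `‖ν‖ ≤ M`. -/
theorem multilinear_expansion_second_order_remainder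
    (n : ℕ) (B K M : ℝ) (hB : 0 ≤ B) (hK : 0 ≤ K) (hM : 0 < M) :
    ∃ C : ℝ, ∀ (u : (Fin (n + 1) → ℝ) → ℝ), Measurable u → (∀ x, |u x| ≤ B) →
      (∀ (σ : Equiv.Perm (Fin (n + 1))) (x : Fin (n + 1) → ℝ), u (x ∘ σ) = u x) →
      ∀ (Λ : Measure ℝ) (_ : IsFiniteMeasure Λ), (Λ Set.univ).toReal ≤ K →
      ∀ ν : SignedMeasure ℝ, tvNorm ν ≤ M →
        |prodIntegralDiff (n + 1) u (Λ + ν.toJordanDecomposition.posPart)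
            ν.toJordanDecomposition.negPart -
          (∫ x : Fin (n + 1) → ℝ, u x ∂(Measure.pi fun _ => Λ)) -
          signedIntegral
            (fun x => (n + 1 : ℝ) *
              ∫ z : Fin n → ℝ, u (Fin.cons x z) ∂(Measure.pi fun _ => Λ)) ν| ≤
          C * tvNorm ν ^ 2 :=
  multilinear_expansion_second_order_remainder_general n B K M hB
end

section
/- In the linear programming step of the steepest descent on measures: given g_1 ≥ g_2 ≥ ... ≥ g_l and λ_1,...,λ_l ≥ 0 with Σλ_i > ε > 0, the vector ν* described by the two-case formula (removing mass −λ_i from the largest-gradient coordinates until budget ε or index i_g is exhausted, placing any leftover mass on coordinate l) minimizes Σ_i g_i ν_i over all ν ∈ ℝ^l satisfying Σ_i |ν_i| ≤ ε and ν_i ≥ −λ_i for all i. -/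
open Finset

lemma dual_bound (l : ℕ) (g y lam ν : ℕ → ℝ) (μ ε : ℝ)
    (hy : ∀ i < l, 0 ≤ y i) (hμ : ∀ i < l, |g i - y i| ≤ μ)
    (hν1 : (∑ i ∈ range l, |ν i|) ≤ ε) (hν2 : ∀ i < l, -lam i ≤ ν i)
    (hμ0 : 0 ≤ μ) :
    -(∑ i ∈ range l, y i * lam i) - μ * ε ≤ ∑ i ∈ range l, g i * ν i := by
  have h1 : ∀ i ∈ range l, (-(μ * |ν i|) - y i * lam i) ≤ g i * ν i := by
    intro i hi
    rw [mem_range] at hi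
    have h3 : |(g i - y i) * ν i| ≤ μ * |ν i| := by
      rw [abs_mul]
      exact mul_le_mul_of_nonneg_right (hμ i hi) (abs_nonneg _)
    have h2 : -(μ * |ν i|) ≤ (g i - y i) * ν i := by
      linarith [neg_abs_le ((g i - y i) * ν i)]
    have h4 : -(y i * lam i) ≤ y i * ν i := by
      nlinarith [hy i hi, hν2 i hi]
    nlinarith [h2, h4]
  have hsum := Finset.sum_le_sum h1
  have hL : ∑ i ∈ range l, (-(μ * |ν i|) - y i * lam i)
      = -(μ * ∑ i ∈ range l, |ν i|) - ∑ i ∈ range l, y i * lam i := by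
    rw [Finset.mul_sum, Finset.sum_sub_distrib, ← Finset.sum_neg_distrib]
  have hμν : μ * ∑ i ∈ range l, |ν i| ≤ μ * ε :=
    mul_le_mul_of_nonneg_left hν1 hμ0
  linarith

/-- The linear programming step of the steepest descent on measures: given
`g 0 ≥ g 1 ≥ … ≥ g (l-1)` and `lam i ≥ 0` with `∑ lam i > ε > 0`, the vector `νs`
(remove mass `-lam i` from the largest-gradient coordinates until the budget `ε` or the
index `i_g = max{i : g i ≥ |g (l-1)|}` is exhausted, placing any leftover mass on the last
coordinate) minimizes `∑ g i * ν i` over all `ν` with `∑ |ν i| ≤ ε` and `ν i ≥ -lam i`.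
Here `c` is such that `∑_{j<c} lam j < ε ≤ ∑_{j<c+1} lam j` (the paper's `i_ε = c+1` in
1-based indexing), and the two cases are `i_ε ≤ i_g` (i.e. `c ≤ ig`) and `i_ε > i_g`. -/
theorem steepest_descent_step_optimal (l : ℕ) (hl : 0 < l) (g lam : ℕ → ℝ) (ε : ℝ)
    (hsort : ∀ i j, i ≤ j → j < l → g j ≤ g i)
    (hlamnn : ∀ i < l, 0 ≤ lam i)
    (hε : 0 < ε) (hmass : ε < ∑ i ∈ range l, lam i)
    (ig : ℕ) (hig1 : ig < l) (hig2 : |g (l - 1)| ≤ g ig)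
    (hig3 : ∀ i < l, |g (l - 1)| ≤ g i → i ≤ ig)
    (c : ℕ) (hc1 : c < l) (hc2 : ∑ j ∈ range c, lam j < ε)
    (hc3 : ε ≤ ∑ j ∈ range (c + 1), lam j)
    (νs : ℕ → ℝ)
    (hνs : ∀ i, νs i =
      if c ≤ ig then
        (if i < c then -lam i else if i = c then (∑ j ∈ range c, lam j) - ε else 0)
      else
        (if i ≤ ig then -lam i
         else if i = l - 1 then ε - ∑ j ∈ range (ig + 1), lam j else 0)) :
    ∀ ν : ℕ → ℝ, (∑ i ∈ range l, |ν i|) ≤ ε → (∀ i < l, -lam i ≤ ν i) →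
      ∑ i ∈ range l, g i * νs i ≤ ∑ i ∈ range l, g i * ν i := by
  intro ν hν1 hν2
  have hgl : ∀ i < l, g (l - 1) ≤ g i := fun i hi => hsort i (l - 1) (by omega) (by omega)
  by_cases hcase : c ≤ ig
  · -- Case 1: μ = g c, y i = g i - g c for i < c
    have hcc : g ig ≤ g c := hsort c ig hcase hig1
    have hμ0 : (0 : ℝ) ≤ g c := le_trans (abs_nonneg _) (le_trans hig2 hcc)
    set y : ℕ → ℝ := fun i => if i < c then g i - g c else 0 with hydef
    have hy : ∀ i < l, 0 ≤ y i := by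
      intro i hi
      simp only [hydef]
      split
      · exact sub_nonneg.2 (hsort i c (by omega) hc1)
      · exact le_refl 0
    have hμ : ∀ i < l, |g i - y i| ≤ g c := by
      intro i hi
      simp only [hydef]
      split
      case isTrue h =>
        have : g i - (g i - g c) = g c := by ring
        rw [this, abs_of_nonneg hμ0]
      case isFalse h =>
        rw [sub_zero, abs_le]
        refine ⟨?_, hsort c i (by omega) hi⟩
        have h1 := hgl i hi
        have h2 := neg_abs_le (g (l - 1))
        linarith [hig2]
    have key := dual_bound l g y lam ν (g c) ε hy hμ hν1 hν2 hμ0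
    have hval : ∑ i ∈ range l, g i * νs i
        = (∑ i ∈ range c, g i * (-lam i)) + g c * ((∑ j ∈ range c, lam j) - ε) := by
      rw [← Finset.sum_subset (show range (c + 1) ⊆ range l by
          intro x hx; rw [mem_range] at *; omega)
        (by
          intro i hi hni
          rw [mem_range] at *
          rw [hνs i, if_pos hcase, if_neg (by omega), if_neg (by omega), mul_zero])]
      rw [Finset.sum_range_succ]
      congr 1
      · apply Finset.sum_congr rfl
        intro i hi
        rw [mem_range] at hi
        rw [hνs i, if_pos hcase, if_pos hi]
      · rw [hνs c, if_pos hcase, if_neg (by omega), if_pos rfl]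
    have hyval : ∑ i ∈ range l, y i * lam i = ∑ i ∈ range c, (g i - g c) * lam i := by
      rw [← Finset.sum_subset (show range c ⊆ range l by
          intro x hx; rw [mem_range] at *; omega)
        (by
          intro i hi hni
          rw [mem_range] at *
          simp only [hydef, if_neg (show ¬ i < c by omega), zero_mul])]
      apply Finset.sum_congr rfl
      intro i hi
      rw [mem_range] at hi
      simp only [hydef, if_pos hi]
    have hexp1 : ∑ i ∈ range c, (g i - g c) * lam i
        = ∑ i ∈ range c, g i * lam i - g c * ∑ i ∈ range c, lam i := by
      rw [Finset.mul_sum, ← Finset.sum_sub_distrib]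
      exact Finset.sum_congr rfl (fun i _ => by ring)
    have hexp2 : ∑ i ∈ range c, g i * (-lam i) = -∑ i ∈ range c, g i * lam i := by
      rw [← Finset.sum_neg_distrib]
      exact Finset.sum_congr rfl (fun i _ => by ring)
    rw [hval, hexp2]
    rw [hyval, hexp1] at key
    nlinarith [key]
  · -- Case 2: μ = |g (l-1)|, y i = g i - |g (l-1)| for i ≤ ig
    push_neg at hcase
    have higl : ig < l - 1 := by omega
    have hgneg : g (l - 1) < 0 := by
      by_contra h
      push_neg at h
      have : |g (l - 1)| ≤ g (l - 1) := le_of_eq (abs_of_nonneg h)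
      have := hig3 (l - 1) (by omega) this
      omega
    have hA : |g (l - 1)| = -g (l - 1) := abs_of_neg hgneg
    have hμ0 : (0 : ℝ) ≤ |g (l - 1)| := abs_nonneg _
    set A := |g (l - 1)| with hAdef
    set y : ℕ → ℝ := fun i => if i ≤ ig then g i - A else 0 with hydef
    have hy : ∀ i < l, 0 ≤ y i := by
      intro i hi
      simp only [hydef]
      split
      case isTrue h => exact sub_nonneg.2 (le_trans hig2 (hsort i ig h hig1))
      case isFalse h => exact le_refl 0
    have hμ : ∀ i < l, |g i - y i| ≤ A := by
      intro i hi
      simp only [hydef]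
      split
      case isTrue h =>
        have : g i - (g i - A) = A := by ring
        rw [this, abs_of_nonneg hμ0]
      case isFalse h =>
        rw [sub_zero, abs_le]
        constructor
        · have := hgl i hi
          linarith [hA]
        · by_contra hcon
          push_neg at hcon
          exact h (hig3 i hi (le_of_lt hcon))
    have key := dual_bound l g y lam ν A ε hy hμ hν1 hν2 hμ0
    have hl1 : l - 1 + 1 = l := by omega
    have hcase' : ¬ c ≤ ig := by omega
    have hval : ∑ i ∈ range l, g i * νs i
        = (∑ i ∈ range (ig + 1), g i * (-lam i))
          + g (l - 1) * (ε - ∑ j ∈ range (ig + 1), lam j) := by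
      rw [← hl1, Finset.sum_range_succ]
      simp only [Nat.add_sub_cancel]
      congr 1
      · rw [← Finset.sum_subset (show range (ig + 1) ⊆ range (l - 1) by
            intro x hx; rw [mem_range] at *; omega)
          (by
            intro i hi hni
            rw [mem_range] at *
            rw [hνs i, if_neg hcase', if_neg (by omega), if_neg (by omega), mul_zero])]
        apply Finset.sum_congr rfl
        intro i hi
        rw [mem_range] at hi
        rw [hνs i, if_neg hcase', if_pos (by omega)]
      · rw [hνs (l - 1), if_neg hcase', if_neg (by omega), if_pos rfl]
    have hyval : ∑ i ∈ range l, y i * lam i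
        = ∑ i ∈ range (ig + 1), (g i - A) * lam i := by
      rw [← Finset.sum_subset (show range (ig + 1) ⊆ range l by
          intro x hx; rw [mem_range] at *; omega)
        (by
          intro i hi hni
          rw [mem_range] at *
          simp only [hydef, if_neg (show ¬ i ≤ ig by omega), zero_mul])]
      apply Finset.sum_congr rfl
      intro i hi
      rw [mem_range] at hi
      simp only [hydef, if_pos (show i ≤ ig by omega)]
    have hexp1 : ∑ i ∈ range (ig + 1), (g i - A) * lam i
        = ∑ i ∈ range (ig + 1), g i * lam i - A * ∑ i ∈ range (ig + 1), lam i := by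
      rw [Finset.mul_sum, ← Finset.sum_sub_distrib]
      exact Finset.sum_congr rfl (fun i _ => by ring)
    have hexp2 : ∑ i ∈ range (ig + 1), g i * (-lam i)
        = -∑ i ∈ range (ig + 1), g i * lam i := by
      rw [← Finset.sum_neg_distrib]
      exact Finset.sum_congr rfl (fun i _ => by ring)
    have hrw : g (l - 1) * (ε - ∑ j ∈ range (ig + 1), lam j)
        = -(A * (ε - ∑ j ∈ range (ig + 1), lam j)) := by rw [hA]; ring
    rw [hval, hexp2, hrw]
    rw [hyval, hexp1] at key
    have heq : -(∑ i ∈ range (ig + 1), g i * lam i - A * ∑ i ∈ range (ig + 1), lam i)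
          - A * ε
        = -∑ i ∈ range (ig + 1), g i * lam i
          + -(A * (ε - ∑ j ∈ range (ig + 1), lam j)) := by ring
    linarith [key]
end
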